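/- For every graph G on n vertices with at least one edge, the reduced homology of the noncover complex NC(G) vanishes in all dimensions j ≥ n − iγ(G) − 1. -/

import Mathlib

variable {V : Type*} [Fintype V] [LinearOrder V]

open Finset

/-- `W` dominates the set `A` in `G`: every vertex of `A` is in `W` or adjacent to a vertex of `W`. -/
def Dominates (G : SimpleGraph V) (W A : Finset V) : Prop :=
  ∀ a ∈ A, a ∈ W ∨ ∃ w ∈ W, G.Adj w a

/-- `I` is an independent set of `G`. -/
def IndepSet (G : SimpleGraph V) (I : Finset V) : Prop :=
  ∀ u ∈ I, ∀ v ∈ I, ¬ G.Adj u v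

instance (G : SimpleGraph V) [DecidableRel G.Adj] (I : Finset V) :
    Decidable (IndepSet G I) := by unfold IndepSet; infer_instance

/-- The domination number of `G`. -/
noncomputable def gamma (G : SimpleGraph V) : ℕ :=
  sInf {k | ∃ W : Finset V, W.card = k ∧ Dominates G W Finset.univ}

/-- The independence domination number of `G`. -/
noncomputable def igamma (G : SimpleGraph V) : ℕ :=
  sInf {k | ∀ I : Finset V, IndepSet G I → ∃ W : Finset V, W.card ≤ k ∧ Dominates G W I}

/-- The noncover complex of `G`: faces are the vertex sets whose complement is not independent. -/
def NC (G : SimpleGraph V) [DecidableRel G.Adj] : Finset (Finset V) :=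
  Finset.univ.filter fun W => ¬ IndepSet G Wᶜ

/-- The independence complex of `G`. -/
def IndComplex (G : SimpleGraph V) [DecidableRel G.Adj] : Finset (Finset V) :=
  Finset.univ.filter fun I => IndepSet G I

/-- The combinatorial Alexander dual of a complex on the full vertex set `V`. -/
def AlexDual (K : Finset (Finset V)) : Finset (Finset V) :=
  Finset.univ.filter fun s => sᶜ ∉ K

/-- `K` is a simplicial complex (downward closed family of finite sets). -/
def IsComplex (K : Finset (Finset V)) : Prop :=
  ∀ σ ∈ K, ∀ τ ⊆ σ, τ ∈ K

/-- `s` is a maximal face (facet) of `K`. -/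
def IsMaxFace (K : Finset (Finset V)) (s : Finset V) : Prop :=
  s ∈ K ∧ ∀ t ∈ K, s ⊆ t → t = s

/-- `σ` is a free face of `K`: a face contained in a unique maximal face. -/
def IsFreeFace (K : Finset (Finset V)) (σ : Finset V) : Prop :=
  σ ∈ K ∧ ∃ τ ∈ K, σ ⊆ τ ∧ ∀ ρ ∈ K, σ ⊆ ρ → ρ ⊆ τ

/-- `K'` is obtained from `K` by an elementary `d`-collapse. -/
def ElemCollapse (d : ℕ) (K K' : Finset (Finset V)) : Prop :=
  ∃ σ : Finset V, IsFreeFace K σ ∧ σ.card ≤ d ∧ K' = K.filter fun ρ => ¬ σ ⊆ ρ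

/-- `K` is `d`-collapsible. -/
def Collapsible (d : ℕ) (K : Finset (Finset V)) : Prop :=
  Relation.ReflTransGen (ElemCollapse d) K ∅

/-- chordality -/
def IsChordal (G : SimpleGraph V) : Prop :=
  ∀ (u : V) (c : G.Walk u u), c.IsCycle → 4 ≤ c.length →
    ∃ x ∈ c.support, ∃ y ∈ c.support, G.Adj x y ∧ s(x, y) ∉ c.edges

/-- simplicial vertex -/
def IsSimplicialVtx (G : SimpleGraph V) (v : V) : Prop :=
  ∀ x y : V, G.Adj v x → G.Adj v y → x ≠ y → G.Adj x y

/-- The group of simplicial `ℤ`-chains of `K` supported on faces of cardinality `k`. -/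
abbrev chainC (K : Finset (Finset V)) (k : ℕ) : Type _ :=
  {s : Finset V // s ∈ K ∧ s.card = k} → ℤ

/-- The simplicial boundary map from chains on faces of cardinality `k+1`
to chains on faces of cardinality `k` (for `k = 0` this is the augmentation map,
so the associated homology is reduced homology). -/
noncomputable def bdry (K : Finset (Finset V)) (k : ℕ) :
    chainC K (k + 1) →ₗ[ℤ] chainC K k where
  toFun c t :=
    ∑ s : {s : Finset V // s ∈ K ∧ s.card = k + 1},
      if t.1 ⊆ s.1 then
        (∑ v ∈ s.1 \ t.1, (-1 : ℤ) ^ (t.1.filter (· < v)).card) * c s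
      else 0
  map_add' c c' := by
    funext t
    simp only [Pi.add_apply]
    rw [← Finset.sum_add_distrib]
    exact Finset.sum_congr rfl fun s _ => by split <;> ring
  map_smul' r c := by
    funext t
    simp only [Pi.smul_apply, smul_eq_mul, RingHom.id_apply]
    rw [Finset.mul_sum]
    exact Finset.sum_congr rfl fun s _ => by split <;> ring

/-- The reduced simplicial homology of `K` (with `ℤ` coefficients) in dimension `j ≥ 0`:
cycles of dimension `j` (faces of cardinality `j+1`) modulo boundaries. -/
noncomputable abbrev rHomology (K : Finset (Finset V)) (j : ℕ) :=
  LinearMap.ker (bdry K j) ⧸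
    (LinearMap.range (bdry K (j + 1))).comap (LinearMap.ker (bdry K j)).subtype

/-- Vanishing of the reduced simplicial homology `H̃_j(K)` with `ℤ` coefficients,
for an arbitrary integer dimension `j` (trivial for `j ≤ -2`). -/
def RHomVanishes (K : Finset (Finset V)) (j : ℤ) : Prop :=
  if j ≤ -2 then True
  else if j = -1 then ∀ c : chainC K 0, ∃ b : chainC K 1, bdry K 0 b = c
  else ∀ c : chainC K (j.toNat + 1), bdry K j.toNat c = 0 →
    ∃ b : chainC K (j.toNat + 2), bdry K (j.toNat + 1) b = c

/-!
Chains of the full simplex on `V` form an acyclic complex, so a cycle of `NC(G)` bounds in the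
simplex, and it bounds in `NC(G)` as soon as the relative cycles of the pair (simplex, `NC(G)`)
bound. The faces outside `NC(G)` are the covers `t`, those with `tᶜ` independent. Fix an
independent set `I` that no set of fewer than `iγ(G)` vertices dominates, and grade covers by the
level `#(tᶜ \ I)`: adding a vertex of `I` keeps the level, adding any other vertex lowers it. On a
class of covers with a fixed `tᶜ \ I` of size `< iγ(G)`, some `a ∈ I` has no neighbour in
`tᶜ \ I`, so removing `a` from a cover leaves a cover, and coning from `a` contracts the
level-preserving part of the boundary. This kills a relative cycle level by level, as long as the
complements of its faces have fewer than `iγ(G)` vertices: the range `j ≥ n - iγ(G) - 1`.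
-/

namespace NoncoverComplex

def insertSign (v : V) (t : Finset V) : ℤ := (-1) ^ #(t.filter (· < v))

omit [Fintype V] in
lemma insertSign_mul_self (v : V) (t : Finset V) : insertSign v t * insertSign v t = 1 := by
  rw [insertSign, ← pow_add]
  exact Even.neg_one_pow ⟨_, rfl⟩

omit [Fintype V] in
lemma insertSign_insert {v w : V} {t : Finset V} (hv : v ∉ t) :
    insertSign w (insert v t) = (if v < w then -1 else 1) * insertSign w t := by
  rw [insertSign, insertSign, filter_insert]
  split_ifs with h
  · rw [card_insert_of_notMem (fun h' => hv (mem_of_mem_filter _ h')), pow_succ, mul_comm]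
  · rw [one_mul]

omit [Fintype V] in
lemma insertSign_mul_insertSign_insert_add {a b : V} {t : Finset V} (ha : a ∉ t) (hb : b ∉ t)
    (hab : a ≠ b) :
    insertSign a t * insertSign b (insert a t) +
      insertSign b t * insertSign a (insert b t) = 0 := by
  rw [insertSign_insert ha, insertSign_insert hb]
  rcases hab.lt_or_gt with h | h
  · rw [if_pos h, if_neg h.asymm]; ring
  · rw [if_neg h.asymm, if_pos h]; ring

omit [Fintype V] in
lemma insertSign_insert_mul_insertSign_insert_add {a b : V} {t : Finset V} (ha : a ∉ t)
    (hb : b ∉ t) (hab : a ≠ b) :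
    insertSign b (insert a t) * insertSign a (insert b t) +
      insertSign a t * insertSign b t = 0 := by
  rw [insertSign_insert ha, insertSign_insert hb]
  rcases hab.lt_or_gt with h | h
  · rw [if_pos h, if_neg h.asymm]; ring
  · rw [if_neg h.asymm, if_pos h]; ring

/-- Chains of the full simplex on `V` are encoded as functions `Finset V → ℤ`, all dimensions at
once; `partialBoundary S` keeps the part of the boundary that deletes a vertex of `S`. -/
def partialBoundary (S : Finset V) : (Finset V → ℤ) →ₗ[ℤ] (Finset V → ℤ) where
  toFun x t := ∑ v ∈ S \ t, insertSign v t * x (insert v t)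
  map_add' x y := by ext t; simp only [Pi.add_apply, mul_add, sum_add_distrib]
  map_smul' r x := by
    ext t
    simp only [Pi.smul_apply, smul_eq_mul, RingHom.id_apply, mul_sum]
    exact sum_congr rfl fun _ _ => by ring

abbrev boundary : (Finset V → ℤ) →ₗ[ℤ] (Finset V → ℤ) := partialBoundary univ

omit [Fintype V] in
lemma partialBoundary_apply (S : Finset V) (x : Finset V → ℤ) (t : Finset V) :
    partialBoundary S x t = ∑ v ∈ S \ t, insertSign v t * x (insert v t) := rfl

omit [Fintype V] in
lemma partialBoundary_congr {S t : Finset V} {x y : Finset V → ℤ}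
    (h : ∀ v ∈ S \ t, x (insert v t) = y (insert v t)) :
    partialBoundary S x t = partialBoundary S y t :=
  sum_congr rfl fun v hv => by rw [h v hv]

omit [Fintype V] in
lemma partialBoundary_eq_zero {S t : Finset V} {x : Finset V → ℤ}
    (h : ∀ v ∈ S \ t, x (insert v t) = 0) : partialBoundary S x t = 0 :=
  sum_eq_zero fun v hv => by rw [h v hv, mul_zero]

lemma partialBoundary_add_partialBoundary_compl (S : Finset V) (x : Finset V → ℤ)
    (t : Finset V) : partialBoundary S x t + partialBoundary Sᶜ x t = boundary x t := by
  rw [partialBoundary_apply, partialBoundary_apply, partialBoundary_apply,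
    ← sum_union (disjoint_compl_right.mono sdiff_subset sdiff_subset), ← union_sdiff_distrib,
    union_compl]

omit [Fintype V] in
theorem partialBoundary_partialBoundary (S : Finset V) (x : Finset V → ℤ) :
    partialBoundary S (partialBoundary S x) = 0 := by
  ext t
  set f : V → V → ℤ := fun a b =>
    insertSign a t * insertSign b (insert a t) * x (insert b (insert a t))
  have hf : ∀ a ∈ S \ t, ∀ b ∈ (S \ t).erase a, f b a = -f a b := by
    intro a ha b hb
    have hab := (mem_erase.1 hb).1
    simp only [mem_sdiff, mem_erase] at ha hb
    have := insertSign_mul_insertSign_insert_add hb.2.2 ha.2 hab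
    simp only [f, insert_comm a b]
    linear_combination x (insert b (insert a t)) * this
  have hsum : ∑ a ∈ S \ t, ∑ b ∈ (S \ t).erase a, f a b
      = -∑ a ∈ S \ t, ∑ b ∈ (S \ t).erase a, f a b := by
    conv_lhs => rw [sum_comm' (t' := S \ t) (s' := fun b => (S \ t).erase b)
      (fun a b => by simp only [mem_erase]; tauto)]
    simp only [← sum_neg_distrib]
    exact sum_congr rfl fun b hb => sum_congr rfl fun a ha => hf b hb a ha
  have hexpand :
      partialBoundary S (partialBoundary S x) t = ∑ a ∈ S \ t, ∑ b ∈ (S \ t).erase a, f a b := by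
    simp only [partialBoundary_apply, mul_sum, sdiff_insert, f, mul_assoc]
  rw [hexpand, Pi.zero_apply]
  linarith

def cone (apex : Finset V → V) : (Finset V → ℤ) →ₗ[ℤ] (Finset V → ℤ) where
  toFun x t :=
    if apex t ∈ t then insertSign (apex t) (t.erase (apex t)) * x (t.erase (apex t)) else 0
  map_add' x y := by ext t; simp only [Pi.add_apply]; split_ifs <;> ring
  map_smul' r x := by
    ext t; simp only [Pi.smul_apply, smul_eq_mul, RingHom.id_apply]; split_ifs <;> ring

omit [Fintype V] in
lemma cone_apply_of_mem {apex : Finset V → V} {t : Finset V} (x : Finset V → ℤ)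
    (h : apex t ∈ t) :
    cone apex x t = insertSign (apex t) (t.erase (apex t)) * x (t.erase (apex t)) := if_pos h

omit [Fintype V] in
lemma cone_apply_of_notMem {apex : Finset V → V} {t : Finset V} (x : Finset V → ℤ)
    (h : apex t ∉ t) : cone apex x t = 0 := if_neg h

omit [Fintype V] in
theorem partialBoundary_cone_add_cone_partialBoundary {S : Finset V} {apex : Finset V → V}
    (h_insert : ∀ s, ∀ v ∈ S, apex (insert v s) = apex s) {t : Finset V} (ht : apex t ∈ S)
    (x : Finset V → ℤ) :
    partialBoundary S (cone apex x) t + cone apex (partialBoundary S x) t = x t := by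
  obtain ⟨a, ha⟩ : ∃ a, apex t = a := ⟨_, rfl⟩
  rw [ha] at ht
  by_cases hat : a ∈ t
  · obtain ⟨r, hr⟩ : ∃ r, t.erase a = r := ⟨_, rfl⟩
    have har : a ∉ r := hr ▸ notMem_erase a t
    have htr : insert a r = t := hr ▸ insert_erase hat
    have hsdiff : S \ r = insert a (S \ t) := by
      rw [← htr, sdiff_insert, insert_erase (mem_sdiff.2 ⟨ht, har⟩)]
    have hterm : ∀ v ∈ S \ t, insertSign v t * cone apex x (insert v t)
        = -(insertSign a r * (insertSign v r * x (insert v r))) := by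
      intro v hv
      obtain ⟨hvS, hvt⟩ := mem_sdiff.1 hv
      have hva : a ≠ v := fun h => hvt (h ▸ hat)
      have hvr : v ∉ r := fun h => hvt (mem_of_mem_erase (hr ▸ h))
      rw [cone_apply_of_mem x (by rw [h_insert t v hvS, ha]; exact mem_insert_of_mem hat),
        h_insert t v hvS, ha, erase_insert_of_ne hva.symm, hr, ← htr]
      linear_combination x (insert v r) * insertSign_insert_mul_insertSign_insert_add har hvr hva
    rw [partialBoundary_apply, sum_congr rfl hterm, cone_apply_of_mem _ (ha ▸ hat), ha, hr,
      partialBoundary_apply, hsdiff, sum_insert (fun h => (mem_sdiff.1 h).2 hat), htr,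
      sum_neg_distrib, mul_add, mul_sum, ← mul_assoc, insertSign_mul_self, one_mul]
    ring
  · rw [cone_apply_of_notMem _ (ha ▸ hat), add_zero, partialBoundary_apply,
      sum_eq_single_of_mem a (mem_sdiff.2 ⟨ht, hat⟩), cone_apply_of_mem, h_insert t a ht, ha,
      erase_insert hat, ← mul_assoc, insertSign_mul_self, one_mul]
    · rw [h_insert t a ht, ha]; exact mem_insert_self a t
    · intro v hv hva
      obtain ⟨hvS, hvt⟩ := mem_sdiff.1 hv
      rw [cone_apply_of_notMem, mul_zero]
      rw [h_insert t v hvS, ha, mem_insert]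
      exact fun h => h.elim hva.symm hat

/-- The boundary of the pair (full simplex, `K`); relative chains are the functions vanishing
on `K`. -/
def relBoundary (K : Finset (Finset V)) : (Finset V → ℤ) →ₗ[ℤ] (Finset V → ℤ) where
  toFun x t := if t ∈ K then 0 else boundary x t
  map_add' x y := by ext t; simp only [Pi.add_apply, map_add]; split_ifs <;> ring
  map_smul' r x := by
    ext t; simp only [Pi.smul_apply, map_smul, smul_eq_mul, RingHom.id_apply]; split_ifs <;> ring

lemma relBoundary_apply_of_notMem {K : Finset (Finset V)} {t : Finset V} (x : Finset V → ℤ)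
    (ht : t ∉ K) : relBoundary K x t = boundary x t := if_neg ht

lemma relBoundary_apply_of_mem {K : Finset (Finset V)} {t : Finset V} (x : Finset V → ℤ)
    (ht : t ∈ K) : relBoundary K x t = 0 := if_pos ht

omit [Fintype V] in
lemma insert_notMem_of_isComplex {K : Finset (Finset V)} (hK : IsComplex K) {t : Finset V}
    (ht : t ∉ K) (v : V) : insert v t ∉ K :=
  fun h => ht (hK _ h t (subset_insert v t))

theorem relBoundary_relBoundary {K : Finset (Finset V)} (hK : IsComplex K) (x : Finset V → ℤ) :
    relBoundary K (relBoundary K x) = 0 := by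
  ext t
  by_cases ht : t ∈ K
  · exact relBoundary_apply_of_mem _ ht
  · rw [relBoundary_apply_of_notMem _ ht, Pi.zero_apply,
      partialBoundary_congr (y := boundary x) fun v _ =>
        relBoundary_apply_of_notMem x (insert_notMem_of_isComplex hK ht v),
      partialBoundary_partialBoundary, Pi.zero_apply]

theorem boundary_cone_const_add_cone_const_boundary (a : V) (x : Finset V → ℤ) :
    boundary (cone (fun _ => a) x) + cone (fun _ => a) (boundary x) = x := by
  ext t
  exact partialBoundary_cone_add_cone_partialBoundary (apex := fun _ => a) (fun _ _ _ => rfl)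
    (mem_univ a) x

lemma card_compl_insert_add_one {v : V} {t : Finset V} (hv : v ∉ t) :
    #(insert v t)ᶜ + 1 = #tᶜ := by
  rw [compl_insert]
  exact card_erase_add_one (mem_compl.2 hv)

/-- The connecting map of the pair (full simplex, `K`), made explicit by coning off from a fixed
vertex. -/
theorem exists_boundary_eq_of_relBoundary_exact [Nonempty V] {K : Finset (Finset V)}
    (hK : IsComplex K) {q : ℕ}
    (hexact : ∀ β : Finset V → ℤ, (∀ t, β t ≠ 0 → t ∉ K ∧ #tᶜ < q) →
      relBoundary K β = 0 → ∃ y, relBoundary K y = β)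
    {c : Finset V → ℤ} (hcK : ∀ t ∉ K, c t = 0) (hc : boundary c = 0)
    (hcq : ∀ t, c t ≠ 0 → #tᶜ ≤ q) :
    ∃ b : Finset V → ℤ, (∀ t ∉ K, b t = 0) ∧ boundary b = c := by
  let a : V := Classical.arbitrary V
  have hcone : boundary (cone (fun _ => a) c) = c := by
    simpa [hc] using boundary_cone_const_add_cone_const_boundary a c
  set β : Finset V → ℤ := fun t => if t ∈ K then 0 else cone (fun _ => a) c t
  have hβ : ∀ t, β t ≠ 0 → t ∉ K ∧ #tᶜ < q := by
    intro t ht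
    by_cases htK : t ∈ K
    · simp [β, htK] at ht
    by_cases hat : a ∈ t
    · simp only [β, htK, if_false, cone_apply_of_mem (apex := fun _ => a) c hat] at ht
      have := hcq _ (right_ne_zero_of_mul ht)
      have := card_compl_insert_add_one (notMem_erase a t)
      rw [insert_erase hat] at this
      exact ⟨htK, by omega⟩
    · simp [β, htK, cone_apply_of_notMem (apex := fun _ => a) c hat] at ht
  have hβcycle : relBoundary K β = 0 := by
    ext t
    by_cases htK : t ∈ K
    · exact relBoundary_apply_of_mem _ htK
    rw [relBoundary_apply_of_notMem _ htK, Pi.zero_apply,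
      partialBoundary_congr (y := cone (fun _ => a) c) fun v _ => by
        simp [β, insert_notMem_of_isComplex hK htK v],
      hcone, hcK t htK]
  obtain ⟨y, hy⟩ := hexact β hβ hβcycle
  refine ⟨cone (fun _ => a) c - boundary y, fun t htK => ?_, ?_⟩
  · have := congr_fun hy t
    simp only [β, relBoundary_apply_of_notMem _ htK, htK, if_false] at this
    simp [this]
  · rw [map_sub, hcone, partialBoundary_partialBoundary, sub_zero]

def extendByZero {K : Finset (Finset V)} {k : ℕ} (c : chainC K k) (t : Finset V) : ℤ :=
  if h : t ∈ K ∧ #t = k then c ⟨t, h⟩ else 0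

omit [Fintype V] in
lemma extendByZero_of_mem {K : Finset (Finset V)} {k : ℕ} (c : chainC K k)
    {t : Finset V} (h : t ∈ K ∧ #t = k) : extendByZero c t = c ⟨t, h⟩ := dif_pos h

omit [Fintype V] in
lemma extendByZero_eq_zero {K : Finset (Finset V)} {k : ℕ} (c : chainC K k)
    {t : Finset V} (h : ¬(t ∈ K ∧ #t = k)) : extendByZero c t = 0 := dif_neg h

theorem bdry_apply (K : Finset (Finset V)) (k : ℕ) (c : chainC K (k + 1))
    (t : {s : Finset V // s ∈ K ∧ #s = k}) :
    bdry K k c t = boundary (extendByZero c) t.1 := by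
  obtain ⟨t, htK, htk⟩ := t
  let F : Finset V → ℤ := fun u =>
    if t ⊆ u then (∑ v ∈ u \ t, insertSign v t) * extendByZero c u else 0
  have hF : ∀ u, F u ≠ 0 → u ∈ K ∧ #u = k + 1 := fun u hu => by
    by_contra h
    simp [F, extendByZero_eq_zero c h] at hu
  calc bdry K k c ⟨t, htK, htk⟩ = ∑ s : {s : Finset V // s ∈ K ∧ #s = k + 1}, F s.1 :=
        sum_congr rfl fun s _ => by simp only [F, extendByZero_of_mem c s.2]; rfl
    _ = ∑ u, F u := by
        rw [← sum_subtype (univ.filter fun u => u ∈ K ∧ #u = k + 1) (by simp),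
          sum_filter_of_ne fun u _ => hF u]
    _ = ∑ u with t ⊆ u, ∑ v ∈ u \ t, insertSign v t * extendByZero c u := by
        simp only [F, sum_filter, sum_mul]
    _ = ∑ v ∈ univ \ t, ∑ u with insert v t ⊆ u, insertSign v t * extendByZero c u :=
        sum_comm' fun u v => by
          simp only [mem_filter, mem_univ, true_and, mem_sdiff, insert_subset_iff]; tauto
    _ = boundary (extendByZero c) t := by
        refine sum_congr rfl fun v hv => sum_eq_single_of_mem _ (by simp) fun u hu hne => ?_
        rw [extendByZero_eq_zero c fun h => hne (eq_of_subset_of_card_le (mem_filter.1 hu).2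
          (by rw [h.2, card_insert_of_notMem (mem_sdiff.1 hv).2, htk])).symm, mul_zero]

theorem boundary_extendByZero_eq_zero {K : Finset (Finset V)} (hK : IsComplex K) {k : ℕ}
    {c : chainC K (k + 1)} (hc : bdry K k c = 0) : boundary (extendByZero c) = 0 := by
  ext t
  by_cases h : t ∈ K ∧ #t = k
  · rw [← bdry_apply K k c ⟨t, h⟩, hc]; rfl
  refine partialBoundary_eq_zero fun v hv => extendByZero_eq_zero c fun hv' => h ?_
  have hvt := (mem_sdiff.1 hv).2
  exact ⟨hK _ hv'.1 t (subset_insert v t), by simpa [card_insert_of_notMem hvt] using hv'.2⟩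

theorem bdry_restrict {K : Finset (Finset V)} {k : ℕ} {b : Finset V → ℤ}
    (hb : ∀ t ∉ K, b t = 0) : bdry K k (fun s => b s.1) = fun t => boundary b t.1 := by
  ext ⟨t, htK, htk⟩
  rw [bdry_apply]
  refine partialBoundary_congr fun v hv => ?_
  by_cases hvK : insert v t ∈ K
  · rw [extendByZero_of_mem _ ⟨hvK, by rw [card_insert_of_notMem (mem_sdiff.1 hv).2, htk]⟩]
  · rw [extendByZero_eq_zero _ fun h => hvK h.1, hb _ hvK]

theorem rHomVanishes_of_relBoundary_exact [Nonempty V] {K : Finset (Finset V)}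
    (hK : IsComplex K) {q : ℕ}
    (hexact : ∀ β : Finset V → ℤ, (∀ t, β t ≠ 0 → t ∉ K ∧ #tᶜ < q) →
      relBoundary K β = 0 → ∃ y, relBoundary K y = β)
    {j : ℕ} (hj : Fintype.card V ≤ j + 1 + q) : RHomVanishes K j := by
  simp only [RHomVanishes, Int.toNat_natCast, if_neg (by omega : ¬(j : ℤ) ≤ -2),
    if_neg (by omega : ¬(j : ℤ) = -1)]
  intro c hc
  obtain ⟨b, hbK, hb⟩ := exists_boundary_eq_of_relBoundary_exact hK hexact
    (fun t htK => extendByZero_eq_zero c fun h => htK h.1) (boundary_extendByZero_eq_zero hK hc)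
    (fun t ht => by
      have hcard := (not_imp_comm.1 (extendByZero_eq_zero c) ht).2
      have := card_add_card_compl t
      omega)
  refine ⟨fun s => b s.1, ?_⟩
  rw [bdry_restrict hbK]
  ext t
  rw [hb]
  exact extendByZero_of_mem c t.2

lemma compl_insert_sdiff_of_mem {I : Finset V} {v : V} (hv : v ∈ I) (t : Finset V) :
    (insert v t)ᶜ \ I = tᶜ \ I := by
  rw [compl_insert, erase_sdiff_comm, erase_eq_of_notMem fun h => (mem_sdiff.1 h).2 hv]

lemma compl_erase_sdiff_of_mem {I : Finset V} {v : V} (hv : v ∈ I) (t : Finset V) :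
    (t.erase v)ᶜ \ I = tᶜ \ I := by
  rw [compl_erase, insert_sdiff_of_mem _ hv]

lemma card_compl_insert_sdiff_add_one {I t : Finset V} {v : V} (hvI : v ∉ I) (hvt : v ∉ t) :
    #((insert v t)ᶜ \ I) + 1 = #(tᶜ \ I) := by
  rw [compl_insert, erase_sdiff_comm]
  exact card_erase_add_one (mem_sdiff.2 ⟨mem_compl.2 hvt, hvI⟩)

omit [Fintype V] in
lemma ne_zero_of_cone_apply_ne_zero {apex : Finset V → V} {x : Finset V → ℤ} {s : Finset V}
    (h : cone apex x s ≠ 0) : apex s ∈ s ∧ x (s.erase (apex s)) ≠ 0 := by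
  by_cases hs : apex s ∈ s
  · rw [cone_apply_of_mem x hs] at h
    exact ⟨hs, right_ne_zero_of_mul h⟩
  · exact absurd (cone_apply_of_notMem x hs) h

lemma partialBoundary_compl_eq_zero_of_level_le {I t : Finset V} {x : Finset V → ℤ}
    (hx : ∀ s, x s ≠ 0 → #(tᶜ \ I) ≤ #(sᶜ \ I)) : partialBoundary Iᶜ x t = 0 :=
  partialBoundary_eq_zero fun v hv => by
    obtain ⟨hvI, hvt⟩ := mem_sdiff.1 hv
    by_contra h
    have := card_compl_insert_sdiff_add_one (mem_compl.1 hvI) hvt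
    have := hx _ h
    omega

def levelPart (I : Finset V) (ℓ : ℕ) (x : Finset V → ℤ) (t : Finset V) : ℤ :=
  if #(tᶜ \ I) = ℓ then x t else 0

section Cones

variable {K : Finset (Finset V)} {I : Finset V} {q : ℕ} {apex : Finset V → V}

lemma cone_levelPart_ne_zero (hK : IsComplex K)
    (hapex : ∀ t ∉ K, #tᶜ < q → apex t ∈ I ∧ t.erase (apex t) ∉ K) {ℓ : ℕ} {β : Finset V → ℤ}
    (hβ : ∀ t, β t ≠ 0 → t ∉ K ∧ #tᶜ < q) {s : Finset V}
    (hs : cone apex (levelPart I ℓ β) s ≠ 0) :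
    #sᶜ + 1 < q ∧ #(sᶜ \ I) = ℓ := by
  obtain ⟨has, hβ₀⟩ := ne_zero_of_cone_apply_ne_zero hs
  have hlev : #((s.erase (apex s))ᶜ \ I) = ℓ := by_contra fun h => hβ₀ (if_neg h)
  obtain ⟨hsK, hcard⟩ :=
    hβ (s.erase (apex s)) fun h => hβ₀ (by simp only [levelPart, h, ite_self])
  rw [compl_erase, card_insert_of_notMem (by simpa using has)] at hcard
  have haI := (hapex s (fun h => hsK (hK s h _ (erase_subset _ _))) (by omega)).1
  rw [compl_erase_sdiff_of_mem haI] at hlev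
  exact ⟨hcard, hlev⟩

/-- At level `ℓ` the relative boundary of the cone only involves vertices of `I`, along which the
apex does not move, so the cone identity applies; the correction term vanishes because `β` is a
relative cycle with nothing below level `ℓ`. -/
theorem relBoundary_cone_levelPart_apply (hK : IsComplex K)
    (h_insert : ∀ s, ∀ v ∈ I, apex (insert v s) = apex s)
    (hapex : ∀ t ∉ K, #tᶜ < q → apex t ∈ I ∧ t.erase (apex t) ∉ K) {ℓ : ℕ} {β : Finset V → ℤ}
    (hβ : ∀ t, β t ≠ 0 → t ∉ K ∧ #tᶜ < q ∧ ℓ ≤ #(tᶜ \ I)) (hcyc : relBoundary K β = 0)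
    {t : Finset V} (htK : t ∉ K) (htq : #tᶜ < q) (hlev : #(tᶜ \ I) = ℓ) :
    relBoundary K (cone apex (levelPart I ℓ β)) t = β t := by
  obtain ⟨haI, hrK⟩ := hapex t htK htq
  have hβ' : ∀ t, β t ≠ 0 → t ∉ K ∧ #tᶜ < q := fun t ht => ⟨(hβ t ht).1, (hβ t ht).2.1⟩
  have hcone : cone apex (partialBoundary I (levelPart I ℓ β)) t = 0 := by
    by_cases hat : apex t ∈ t
    · set r := t.erase (apex t)
      have hrlev : #(rᶜ \ I) = ℓ := by rw [compl_erase_sdiff_of_mem haI, hlev]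
      have hsplit := partialBoundary_add_partialBoundary_compl I β r
      rw [← relBoundary_apply_of_notMem β hrK, hcyc, partialBoundary_compl_eq_zero_of_level_le
        fun s hs => hrlev ▸ (hβ s hs).2.2, add_zero] at hsplit
      rw [cone_apply_of_mem _ hat, partialBoundary_congr (y := β) fun v hv => if_pos (by
        rw [compl_insert_sdiff_of_mem (mem_sdiff.1 hv).1, hrlev]), hsplit, Pi.zero_apply, mul_zero]
    · exact cone_apply_of_notMem _ hat
  have hcompl : partialBoundary Iᶜ (cone apex (levelPart I ℓ β)) t = 0 :=
    partialBoundary_compl_eq_zero_of_level_le fun s hs =>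
      (hlev.trans (cone_levelPart_ne_zero hK hapex hβ' hs).2.symm).le
  have hid := partialBoundary_cone_add_cone_partialBoundary h_insert haI (levelPart I ℓ β)
  rw [hcone, add_zero] at hid
  rw [relBoundary_apply_of_notMem _ htK, ← partialBoundary_add_partialBoundary_compl I, hcompl,
    add_zero, hid]
  exact if_pos hlev

theorem exists_relBoundary_sub_supported_level_succ (hK : IsComplex K)
    (h_insert : ∀ s, ∀ v ∈ I, apex (insert v s) = apex s)
    (hapex : ∀ t ∉ K, #tᶜ < q → apex t ∈ I ∧ t.erase (apex t) ∉ K) {ℓ : ℕ} {β : Finset V → ℤ}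
    (hβ : ∀ t, β t ≠ 0 → t ∉ K ∧ #tᶜ < q ∧ ℓ ≤ #(tᶜ \ I)) (hcyc : relBoundary K β = 0) :
    ∃ y, ∀ t, (β - relBoundary K y) t ≠ 0 → t ∉ K ∧ #tᶜ < q ∧ ℓ + 1 ≤ #(tᶜ \ I) := by
  have hβ' : ∀ t, β t ≠ 0 → t ∉ K ∧ #tᶜ < q := fun t ht => ⟨(hβ t ht).1, (hβ t ht).2.1⟩
  refine ⟨cone apex (levelPart I ℓ β), fun t ht => ?_⟩
  have hsupp : t ∉ K ∧ #tᶜ < q ∧ ℓ ≤ #(tᶜ \ I) := by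
    by_cases hβt : β t = 0
    swap
    · exact hβ t hβt
    have hQ : relBoundary K (cone apex (levelPart I ℓ β)) t ≠ 0 := fun h => ht (by simp [hβt, h])
    have htK : t ∉ K := fun h => hQ (relBoundary_apply_of_mem _ h)
    rw [relBoundary_apply_of_notMem _ htK] at hQ
    obtain ⟨v, hv, hyv⟩ := exists_ne_zero_of_sum_ne_zero hQ
    obtain ⟨hcard, hlev⟩ := cone_levelPart_ne_zero hK hapex hβ' (right_ne_zero_of_mul hyv)
    have := card_compl_insert_add_one (mem_sdiff.1 hv).2
    have : #((insert v t)ᶜ \ I) ≤ #(tᶜ \ I) :=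
      card_le_card (sdiff_subset_sdiff (compl_subset_compl.2 (subset_insert v t)) le_rfl)
    exact ⟨htK, by omega, by omega⟩
  refine ⟨hsupp.1, hsupp.2.1, Nat.succ_le_of_lt (lt_of_le_of_ne hsupp.2.2 fun h => ht ?_)⟩
  rw [Pi.sub_apply, relBoundary_cone_levelPart_apply hK h_insert hapex hβ hcyc hsupp.1 hsupp.2.1
    h.symm, sub_self]

theorem exists_relBoundary_eq_of_cones (hK : IsComplex K)
    (h_insert : ∀ s, ∀ v ∈ I, apex (insert v s) = apex s)
    (hapex : ∀ t ∉ K, #tᶜ < q → apex t ∈ I ∧ t.erase (apex t) ∉ K) {β : Finset V → ℤ}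
    (hβ : ∀ t, β t ≠ 0 → t ∉ K ∧ #tᶜ < q) (hcyc : relBoundary K β = 0) :
    ∃ y, relBoundary K y = β := by
  suffices h : ∀ k β, (∀ t, β t ≠ 0 → t ∉ K ∧ #tᶜ < q ∧ q ≤ #(tᶜ \ I) + k) →
      relBoundary K β = 0 → ∃ y, relBoundary K y = β from
    h q β (fun t ht => ⟨(hβ t ht).1, (hβ t ht).2, by omega⟩) hcyc
  intro k
  induction k with
  | zero =>
    intro β hβ _
    refine ⟨0, funext fun t => ?_⟩
    rw [map_zero, Pi.zero_apply, eq_comm]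
    by_contra h
    have := hβ t h
    have := card_le_card (sdiff_subset : tᶜ \ I ⊆ tᶜ)
    omega
  | succ k ih =>
    intro β hβ hcyc
    obtain ⟨y, hy⟩ := exists_relBoundary_sub_supported_level_succ (ℓ := q - (k + 1)) hK h_insert
      hapex (fun t ht => ⟨(hβ t ht).1, (hβ t ht).2.1, by have := (hβ t ht).2.2; omega⟩) hcyc
    have hcyc' : relBoundary K (β - relBoundary K y) = 0 := by
      rw [map_sub, hcyc, relBoundary_relBoundary hK, sub_zero]
    obtain ⟨y', hy'⟩ :=
      ih _ (fun t ht => ⟨(hy t ht).1, (hy t ht).2.1, by have := (hy t ht).2.2; omega⟩) hcyc'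
    exact ⟨y + y', by rw [map_add, hy', add_sub_cancel]⟩

end Cones

section Graph

variable {G : SimpleGraph V}

lemma notMem_NC [DecidableRel G.Adj] {t : Finset V} : t ∉ NC G ↔ IndepSet G tᶜ := by
  simp [NC]

omit [Fintype V] [LinearOrder V] in
lemma indepSet_mono {s t : Finset V} (hs : IndepSet G s) (hts : t ⊆ s) : IndepSet G t :=
  fun u hu v hv => hs u (hts hu) v (hts hv)

lemma isComplex_NC (G : SimpleGraph V) [DecidableRel G.Adj] : IsComplex (NC G) := by
  intro σ hσ τ hτ
  by_contra h
  exact notMem_NC.2 (indepSet_mono (notMem_NC.1 h) (compl_subset_compl.2 hτ)) hσ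

omit [Fintype V] in
lemma indepSet_insert {s : Finset V} {a : V} (hs : IndepSet G s) (ha : ∀ w ∈ s, ¬G.Adj w a) :
    IndepSet G (insert a s) := by
  intro u hu v hv
  rcases mem_insert.1 hu with rfl | hu' <;> rcases mem_insert.1 hv with rfl | hv'
  · exact G.loopless.irrefl _
  · exact fun h => ha v hv' h.symm
  · exact ha u hu'
  · exact hs u hu' v hv'

end Graph

theorem exists_relBoundary_eq_of_forall_not_dominates [Nonempty V] {G : SimpleGraph V}
    [DecidableRel G.Adj] {I : Finset V} (hI : IndepSet G I) {q : ℕ}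
    (hdom : ∀ W : Finset V, #W < q → ¬Dominates G W I) {β : Finset V → ℤ}
    (hβ : ∀ t, β t ≠ 0 → t ∉ NC G ∧ #tᶜ < q) (hcyc : relBoundary (NC G) β = 0) :
    ∃ y, relBoundary (NC G) y = β := by
  have : ∀ W : Finset V, ∃ a, #W < q → a ∈ I ∧ ∀ w ∈ W, ¬G.Adj w a := by
    intro W
    by_cases hW : #W < q
    · have := hdom W hW
      simp only [Dominates, not_forall, not_or, not_exists, not_and] at this
      obtain ⟨a, haI, -, hadj⟩ := this
      exact ⟨a, fun _ => ⟨haI, hadj⟩⟩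
    · exact ⟨Classical.arbitrary V, fun h => absurd h hW⟩
  choose a ha using this
  refine exists_relBoundary_eq_of_cones (I := I) (apex := fun t => a (tᶜ \ I)) (isComplex_NC G)
    (fun s v hv => by simp only [compl_insert_sdiff_of_mem hv]) (fun t htK htq => ?_) hβ hcyc
  obtain ⟨haI, hadj⟩ := ha _ ((card_le_card sdiff_subset).trans_lt htq)
  refine ⟨haI, notMem_NC.2 ?_⟩
  rw [compl_erase]
  exact indepSet_insert (notMem_NC.1 htK) fun w hw =>
    if hwI : w ∈ I then hI w hwI _ haI else hadj w (mem_sdiff.2 ⟨hw, hwI⟩)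

lemma igamma_le_card_sub_one {G : SimpleGraph V} {u v : V} (huv : G.Adj u v) :
    igamma G ≤ Fintype.card V - 1 := by
  refine Nat.sInf_le fun I _ =>
    ⟨univ.erase u, by rw [card_erase_of_mem (mem_univ u), card_univ], fun x _ => ?_⟩
  by_cases hx : x = u
  · exact Or.inr ⟨v, mem_erase.2 ⟨huv.ne.symm, mem_univ v⟩, hx ▸ huv.symm⟩
  · exact Or.inl (mem_erase.2 ⟨hx, mem_univ x⟩)

omit [Fintype V] [LinearOrder V] in
lemma exists_indepSet_forall_not_dominates (G : SimpleGraph V) :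
    ∃ I, IndepSet G I ∧ ∀ W : Finset V, #W < igamma G → ¬Dominates G W I := by
  by_contra! h
  obtain ⟨W, hW, -⟩ := h ∅ fun _ h => absurd h (notMem_empty _)
  have : igamma G ≤ igamma G - 1 := Nat.sInf_le fun I hI => by
    obtain ⟨W, hW, hdom⟩ := h I hI
    exact ⟨W, by omega, hdom⟩
  omega

end NoncoverComplex

open NoncoverComplex in
/-- For a graph `G` on `n` vertices with at least one edge,
`H̃_j(NC(G)) = 0` for all `j ≥ n - iγ(G) - 1`. -/
theorem noncover_complex_homology_vanishes (G : SimpleGraph V) [DecidableRel G.Adj]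
    (hE : ∃ u v, G.Adj u v) :
    ∀ j : ℤ, (Fintype.card V : ℤ) - igamma G - 1 ≤ j → RHomVanishes (NC G) j := by
  intro j hj
  obtain ⟨u, v, huv⟩ := hE
  have : Nonempty V := ⟨u⟩
  have hcard := Fintype.card_pos (α := V)
  have higamma := igamma_le_card_sub_one huv
  lift j to ℕ using by omega
  obtain ⟨I, hI, hdom⟩ := exists_indepSet_forall_not_dominates G
  exact rHomVanishes_of_relBoundary_exact (isComplex_NC G)
    (fun _ hβ hcyc => exists_relBoundary_eq_of_forall_not_dominates hI hdom hβ hcyc) (by omega)
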